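/- Let $0<h\le\min\{x-u,\,v-x\}$ for real numbers $u<x<v$, and let $w^2$ be differentiable on $[u,v]$ with $(w^2)'=-2Q'w^2$ where $Q'$ is non-negative and non-decreasing and $w^2$ is non-increasing on $[u,v]$. Then $\left|\mathrm{p.v.}\int_{x-h}^{x+h}\frac{w^2(t)}{x-t}\,dt\right|\le 4h\,w^2(x-h)\,Q'(x+h)$. -/

import Mathlib

open MeasureTheory Filter Set Topology

/-!
After the substitutions `t = x ∓ s`, the truncated principal value integral becomes
`∫_δ^h (w²(x - s) - w²(x + s)) / s ds`. By the mean value theorem the numerator is at most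
`2s · sup |(w²)'|`, so the integrand is bounded by `2 sup |(w²)'|` uniformly in `δ`. On
`[x - h, x + h]` we have `|(w²)'| = 2Q'w² ≤ 2Q'(x + h) w²(x - h)`: `Q'w² ≥ 0` because `w²` is
non-increasing, and `Q'` increases while `w²` decreases.
-/

theorem integral_div_sub_add_integral_div_sub_eq {f : ℝ → ℝ} {x h δ : ℝ} (hδ : 0 < δ)
    (hδh : δ ≤ h) (hf : ContinuousOn f (Icc (x - h) (x + h))) :
    (∫ t in (x - h)..(x - δ), f t / (x - t)) + ∫ t in (x + δ)..(x + h), f t / (x - t) =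
      ∫ s in δ..h, (f (x - s) - f (x + s)) / s := by
  have hleft : (∫ t in (x - h)..(x - δ), f t / (x - t)) = ∫ s in δ..h, f (x - s) / s := by
    rw [← intervalIntegral.integral_comp_sub_left (fun t => f t / (x - t)) x]
    simp
  have hright : (∫ t in (x + δ)..(x + h), f t / (x - t)) = -∫ s in δ..h, f (x + s) / s := by
    rw [← intervalIntegral.integral_comp_add_left (fun t => f t / (x - t)) x]
    simp [div_neg, intervalIntegral.integral_neg]
  have hpos : ∀ s ∈ Icc δ h, s ≠ 0 := fun s hs => (hδ.trans_le hs.1).ne'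
  have hminus : ContinuousOn (fun s => f (x - s) / s) (Icc δ h) :=
    (hf.comp (by fun_prop) fun s hs => ⟨by linarith [hs.2], by linarith [hs.1]⟩).div
      continuousOn_id hpos
  have hplus : ContinuousOn (fun s => f (x + s) / s) (Icc δ h) :=
    (hf.comp (by fun_prop) fun s hs => ⟨by linarith [hs.1], by linarith [hs.2]⟩).div
      continuousOn_id hpos
  have hI : uIcc δ h ⊆ Icc δ h := (uIcc_of_le hδh).subset
  rw [hleft, hright, ← sub_eq_add_neg, ← intervalIntegral.integral_sub
    (hminus.mono hI).intervalIntegrable (hplus.mono hI).intervalIntegrable]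
  congr 1 with s
  ring

theorem abs_le_of_tendsto_integral_div_sub {f : ℝ → ℝ} {x h C L : ℝ} (hh : 0 < h)
    (hf : ContinuousOn f (Icc (x - h) (x + h)))
    (hC : ∀ s ∈ Ioc 0 h, |f (x - s) - f (x + s)| ≤ C * s)
    (hL : Tendsto (fun δ : ℝ => (∫ t in (x - h)..(x - δ), f t / (x - t)) +
        ∫ t in (x + δ)..(x + h), f t / (x - t)) (𝓝[>] 0) (𝓝 L)) :
    |L| ≤ C * h := by
  have hC0 : 0 ≤ C := nonneg_of_mul_nonneg_left
    ((abs_nonneg _).trans (hC h ⟨hh, le_rfl⟩)) hh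
  refine le_of_tendsto hL.abs ?_
  filter_upwards [Ioo_mem_nhdsGT hh] with δ hδ
  rw [integral_div_sub_add_integral_div_sub_eq hδ.1 hδ.2.le hf, ← Real.norm_eq_abs]
  calc ‖∫ s in δ..h, (f (x - s) - f (x + s)) / s‖ ≤ C * |h - δ| := by
        refine intervalIntegral.norm_integral_le_of_norm_le_const fun s hs => ?_
        rw [uIoc_of_le hδ.2.le] at hs
        have hs0 : 0 < s := hδ.1.trans hs.1
        rw [Real.norm_eq_abs, abs_div, abs_of_pos hs0, div_le_iff₀ hs0]
        exact hC s ⟨hs0, hs.2⟩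
    _ ≤ C * h := by
        gcongr
        rw [abs_of_pos (sub_pos.2 hδ.2)]
        linarith [hδ.1]

theorem abs_sub_sub_add_le_of_norm_hasDerivWithinAt_le {f f' : ℝ → ℝ} {x h C : ℝ}
    (hf : ∀ t ∈ Icc (x - h) (x + h), HasDerivWithinAt f (f' t) (Icc (x - h) (x + h)) t)
    (hC : ∀ t ∈ Icc (x - h) (x + h), ‖f' t‖ ≤ C) {s : ℝ} (hs : s ∈ Icc 0 h) :
    |f (x - s) - f (x + s)| ≤ 2 * C * s := by
  have := (convex_Icc _ _).norm_image_sub_le_of_norm_hasDerivWithin_le hf hC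
    (⟨by linarith [hs.1, hs.2], by linarith [hs.2]⟩ : x + s ∈ Icc (x - h) (x + h))
    (⟨by linarith [hs.2], by linarith [hs.1, hs.2]⟩ : x - s ∈ Icc (x - h) (x + h))
  rw [Real.norm_eq_abs, Real.norm_eq_abs, show x - s - (x + s) = -(2 * s) by ring, abs_neg,
    abs_of_nonneg (by linarith [hs.1] : 0 ≤ 2 * s)] at this
  linarith

theorem mul_nonneg_of_antitoneOn_of_hasDerivAt {w Q' : ℝ → ℝ} {u v t : ℝ} (huv : u < v)
    (hderiv : ∀ t ∈ Icc u v, HasDerivAt w (-2 * Q' t * w t) t) (hw : AntitoneOn w (Icc u v))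
    (ht : t ∈ Icc u v) : 0 ≤ Q' t * w t := by
  have hnonpos : derivWithin w (Icc u v) t ≤ 0 := hw.derivWithin_nonpos
  rw [(hderiv t ht).hasDerivWithinAt.derivWithin (uniqueDiffOn_Icc huv t ht)] at hnonpos
  linarith

theorem mul_le_mul_of_monotoneOn_of_antitoneOn {f g : ℝ → ℝ} {s : Set ℝ}
    (hf0 : ∀ t ∈ s, 0 ≤ f t) (hf : MonotoneOn f s) (hg : AntitoneOn g s)
    (hfg : ∀ t ∈ s, 0 ≤ f t * g t) {a b t : ℝ} (ha : a ∈ s) (hb : b ∈ s) (ht : t ∈ s)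
    (hat : a ≤ t) (htb : t ≤ b) : f t * g t ≤ f b * g a := by
  rcases le_or_gt 0 (g t) with hgt | hgt
  · exact mul_le_mul (hf ht hb htb) (hg ha ht hat) hgt (hf0 b hb)
  · calc f t * g t ≤ 0 := mul_nonpos_of_nonneg_of_nonpos (hf0 t ht) hgt.le
      _ ≤ f b * g b := hfg b hb
      _ ≤ f b * g a := mul_le_mul_of_nonneg_left (hg ha hb (hat.trans htb)) (hf0 b hb)

theorem stmt19_general (u v x h : ℝ)
    (hh : 0 < h) (hhle : h ≤ min (x - u) (v - x))
    (w2 Q' : ℝ → ℝ)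
    (hderiv : ∀ t ∈ Set.Icc u v, HasDerivAt w2 (-2 * Q' t * w2 t) t)
    (hQ'nonneg : ∀ t ∈ Set.Icc u v, 0 ≤ Q' t)
    (hQ'mono : ∀ s ∈ Set.Icc u v, ∀ t ∈ Set.Icc u v, s ≤ t → Q' s ≤ Q' t)
    (hw2anti : ∀ s ∈ Set.Icc u v, ∀ t ∈ Set.Icc u v, s ≤ t → w2 t ≤ w2 s)
    (L : ℝ)
    (hL : Filter.Tendsto
      (fun δ : ℝ => (∫ t in (x - h)..(x - δ), w2 t / (x - t)) +
        ∫ t in (x + δ)..(x + h), w2 t / (x - t))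
      (nhdsWithin 0 (Set.Ioi 0)) (nhds L)) :
    |L| ≤ 4 * h * w2 (x - h) * Q' (x + h) := by
  have hu : u ≤ x - h := by linarith [hhle.trans (min_le_left _ _)]
  have hv : x + h ≤ v := by linarith [hhle.trans (min_le_right _ _)]
  have hsub : Icc (x - h) (x + h) ⊆ Icc u v := Icc_subset_Icc hu hv
  have hleft : x - h ∈ Icc u v := hsub ⟨le_rfl, by linarith⟩
  have hright : x + h ∈ Icc u v := hsub ⟨by linarith, le_rfl⟩
  have hsign : ∀ t ∈ Icc u v, 0 ≤ Q' t * w2 t := fun t =>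
    mul_nonneg_of_antitoneOn_of_hasDerivAt (by linarith) hderiv hw2anti
  have hderiv_le : ∀ t ∈ Icc (x - h) (x + h),
      ‖-2 * Q' t * w2 t‖ ≤ 2 * (Q' (x + h) * w2 (x - h)) := fun t ht => by
    rw [Real.norm_eq_abs, mul_assoc, abs_mul, abs_of_nonneg (hsign t (hsub ht)), abs_neg,
      abs_two]
    gcongr 2 * ?_
    exact mul_le_mul_of_monotoneOn_of_antitoneOn hQ'nonneg hQ'mono hw2anti hsign hleft hright
      (hsub ht) ht.1 ht.2
  have hsym : ∀ s ∈ Ioc 0 h, |w2 (x - s) - w2 (x + s)| ≤ 4 * (Q' (x + h) * w2 (x - h)) * s :=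
    fun s hs => by
      have := abs_sub_sub_add_le_of_norm_hasDerivWithinAt_le
        (fun t ht => (hderiv t (hsub ht)).hasDerivWithinAt) hderiv_le (Ioc_subset_Icc_self hs)
      linarith
  have hcont : ContinuousOn w2 (Icc (x - h) (x + h)) := fun t ht =>
    (hderiv t (hsub ht)).continuousAt.continuousWithinAt
  calc |L| ≤ 4 * (Q' (x + h) * w2 (x - h)) * h :=
        abs_le_of_tendsto_integral_div_sub hh hcont hsym hL
    _ = 4 * h * w2 (x - h) * Q' (x + h) := by ring

/-- If `0 < h ≤ min (x-u) (v-x)`, `w²` is differentiable on `[u,v]`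
with `(w²)' = -2 Q' w²`, `Q'` non-negative and non-decreasing, and `w²`
non-increasing on `[u,v]`, then
`|p.v. ∫_{x-h}^{x+h} w²(t)/(x-t) dt| ≤ 4 h w²(x-h) Q'(x+h)`. -/
theorem stmt19 (u v x h : ℝ) (huv : u < x) (hxv : x < v)
    (hh : 0 < h) (hhle : h ≤ min (x - u) (v - x))
    (w2 Q' : ℝ → ℝ)
    (hderiv : ∀ t ∈ Set.Icc u v, HasDerivAt w2 (-2 * Q' t * w2 t) t)
    (hQ'nonneg : ∀ t ∈ Set.Icc u v, 0 ≤ Q' t)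
    (hQ'mono : ∀ s ∈ Set.Icc u v, ∀ t ∈ Set.Icc u v, s ≤ t → Q' s ≤ Q' t)
    (hw2anti : ∀ s ∈ Set.Icc u v, ∀ t ∈ Set.Icc u v, s ≤ t → w2 t ≤ w2 s)
    (L : ℝ)
    (hL : Filter.Tendsto
      (fun δ : ℝ => (∫ t in (x - h)..(x - δ), w2 t / (x - t)) +
        ∫ t in (x + δ)..(x + h), w2 t / (x - t))
      (nhdsWithin 0 (Set.Ioi 0)) (nhds L)) :
    |L| ≤ 4 * h * w2 (x - h) * Q' (x + h) :=
  stmt19_general u v x h hh hhle w2 Q' hderiv hQ'nonneg hQ'mono hw2anti L hL
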